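/- arXiv:1310.2846 — 2 statements merged into one kernel-verified Lean document; each statement's English description precedes it below -/
import Mathlib

section
/- For each integer n define the vector field on ℝ³ (coordinates (t,x,u)): L_n = e^{-nt} ∂_t + n e^{-nt} ∂_x + (sgn(n)/2) (Σ_{j=1}^{|n|} j(j−1)) e^{-nt−2x} ∂_u, where the sum is empty (equal to 0) when n = 0; equivalently the ∂_u-coefficient is ((n³ − n)/6) e^{-nt−2x}. Then for all integers m, n one has [L_m, L_n] = (m − n) L_{m+n}. (Realization 𝔚₁₀ of the Witt algebra from Theorem 1.) -/
noncomputable section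

/-- Partial derivative of `f : ℝ³ → ℝ` (curried) in the first variable `t`. -/
def pt (f : ℝ → ℝ → ℝ → ℝ) (t x u : ℝ) : ℝ := deriv (fun s => f s x u) t

/-- Partial derivative in the second variable `x`. -/
def px (f : ℝ → ℝ → ℝ → ℝ) (t x u : ℝ) : ℝ := deriv (fun s => f t s u) x

/-- Partial derivative in the third variable `u`. -/
def pu (f : ℝ → ℝ → ℝ → ℝ) (t x u : ℝ) : ℝ := deriv (fun s => f t x s) u

/-- A vector field `τ ∂_t + ξ ∂_x + η ∂_u` on ℝ³ with coordinates `(t,x,u)`. -/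
structure VF3 where
  tau : ℝ → ℝ → ℝ → ℝ
  xi  : ℝ → ℝ → ℝ → ℝ
  eta : ℝ → ℝ → ℝ → ℝ

/-- Action of a vector field on a function: `X(F) = τ F_t + ξ F_x + η F_u`. -/
def VF3.app (X : VF3) (F : ℝ → ℝ → ℝ → ℝ) (t x u : ℝ) : ℝ :=
  X.tau t x u * pt F t x u + X.xi t x u * px F t x u + X.eta t x u * pu F t x u

/-- Lie bracket of vector fields on ℝ³. -/
def VF3.bracket (X Y : VF3) : VF3 where
  tau := fun t x u => X.app Y.tau t x u - Y.app X.tau t x u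
  xi  := fun t x u => X.app Y.xi t x u - Y.app X.xi t x u
  eta := fun t x u => X.app Y.eta t x u - Y.app X.eta t x u

/-- Scalar multiple of a vector field. -/
def VF3.smul (c : ℝ) (X : VF3) : VF3 where
  tau := fun t x u => c * X.tau t x u
  xi  := fun t x u => c * X.xi t x u
  eta := fun t x u => c * X.eta t x u

/-- Smoothness of a coefficient function on ℝ³. -/
def Smooth3 (f : ℝ → ℝ → ℝ → ℝ) : Prop :=
  ContDiff ℝ (⊤ : ℕ∞) fun p : ℝ × ℝ × ℝ => f p.1 p.2.1 p.2.2

/-- The vector fields of the realization 𝔚₁₀: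
`L n = e^{-nt} ∂_t + n e^{-nt} ∂_x + (sgn(n)/2)(Σ_{j=1}^{|n|} j(j-1)) e^{-nt-2x} ∂_u`;
the `∂_u`-coefficient equals, in closed form, `((n³ - n)/6) e^{-nt-2x}`. -/
def W10 (n : ℤ) : VF3 where
  tau := fun t _ _ => Real.exp (-(n : ℝ) * t)
  xi  := fun t _ _ => (n : ℝ) * Real.exp (-(n : ℝ) * t)
  eta := fun t x _ => ((n : ℝ) ^ 3 - (n : ℝ)) / 6 * Real.exp (-(n : ℝ) * t - 2 * x)


lemma d_exp (a t : ℝ) : deriv (fun s => Real.exp (a * s)) t = a * Real.exp (a * t) := by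
  simpa [mul_comm] using (((hasDerivAt_id t).const_mul a).exp).deriv

lemma d_cexp (c a t : ℝ) : deriv (fun s => c * Real.exp (a * s)) t
    = c * (a * Real.exp (a * t)) := by
  simpa [mul_comm, mul_assoc] using ((((hasDerivAt_id t).const_mul a).exp).const_mul c).deriv

lemma dt_eta (c a t x : ℝ) : deriv (fun s => c * Real.exp (a * s - 2 * x)) t
    = c * (a * Real.exp (a * t - 2 * x)) := by
  simpa [mul_comm, mul_assoc] using
    (((((hasDerivAt_id t).const_mul a).sub_const (2 * x)).exp).const_mul c).deriv

lemma dx_eta (c a t x : ℝ) : deriv (fun s => c * Real.exp (a * t - 2 * s)) x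
    = c * (-2 * Real.exp (a * t - 2 * x)) := by
  have h : HasDerivAt (fun s : ℝ => a * t - 2 * s) (-2) x := by
    simpa [Pi.sub_def] using (hasDerivAt_const x (a * t)).sub ((hasDerivAt_id x).const_mul 2)
  simpa [mul_comm, mul_assoc] using ((h.exp).const_mul c).deriv

/-- Realization 𝔚₁₀ of the Witt algebra: `[L m, L n] = (m - n) L (m + n)`. -/
theorem witt_realization_W10 (m n : ℤ) :
    VF3.bracket (W10 m) (W10 n) = VF3.smul ((m : ℝ) - (n : ℝ)) (W10 (m + n)) := by
  unfold VF3.bracket VF3.smul VF3.app W10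
  congr 1 <;> funext t x u <;>
    simp only [pt, px, pu, d_exp, d_cexp, dt_eta, dx_eta, deriv_const] <;>
  · push_cast
    simp only [sub_eq_add_neg, neg_add, add_mul, neg_mul, one_mul, Real.exp_add, Real.exp_neg]
    ring
end
end

section
/- Let L_0 = ∂_t and L_1 = e^{-t}(∂_t + ∂_x) be vector fields on ℝ³ (coordinates (t,x,u)). If C = τ∂_t + ξ∂_x + η∂_u is a smooth vector field on ℝ³ satisfying [L_0, C] = 0 and [L_1, C] = 0, then there exist smooth functions f, g, h : ℝ → ℝ such that C = f(u) e^{-x} ∂_t + ( g(u) + f(u) e^{-x} ) ∂_x + h(u) ∂_u. (First step of Case 2 in Section 4: the form of central elements commuting with L_0 and L_1 of the second realization of Lemma 1.) -/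
noncomputable section
lemma deriv_exp_neg' (t : ℝ) : deriv (fun s : ℝ => Real.exp (-s)) t = -Real.exp (-t) := by
  have h : HasDerivAt (fun s : ℝ => Real.exp (-s)) (Real.exp (-t) * (-1)) t :=
    (Real.hasDerivAt_exp (-t)).comp t (hasDerivAt_neg t)
  simpa using h.deriv

/-- First step of Case 2 in Section 4: a smooth vector field `C` commuting with
`L₀ = ∂_t` and `L₁ = e^{-t}(∂_t + ∂_x)` has the form
`C = f(u)e^{-x} ∂_t + (g(u) + f(u)e^{-x}) ∂_x + h(u) ∂_u`. -/
theorem central_element_form_case2 (L0 L1 C : VF3)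
    (hL0 : L0 = ⟨fun _ _ _ => 1, fun _ _ _ => 0, fun _ _ _ => 0⟩)
    (hL1 : L1 = ⟨fun t _ _ => Real.exp (-t), fun t _ _ => Real.exp (-t), fun _ _ _ => 0⟩)
    (hτ : Smooth3 C.tau) (hξ : Smooth3 C.xi) (hη : Smooth3 C.eta)
    (h0 : VF3.bracket L0 C = ⟨fun _ _ _ => 0, fun _ _ _ => 0, fun _ _ _ => 0⟩)
    (h1 : VF3.bracket L1 C = ⟨fun _ _ _ => 0, fun _ _ _ => 0, fun _ _ _ => 0⟩) :
    ∃ f g h : ℝ → ℝ, ContDiff ℝ (⊤ : ℕ∞) f ∧ ContDiff ℝ (⊤ : ℕ∞) g ∧ ContDiff ℝ (⊤ : ℕ∞) h ∧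
      ∀ t x u, C.tau t x u = f u * Real.exp (-x) ∧
        C.xi t x u = g u + f u * Real.exp (-x) ∧
        C.eta t x u = h u := by
  subst hL0 hL1
  have Dτ := hτ.differentiable (by simp)
  have Dξ := hξ.differentiable (by simp)
  have Dη := hη.differentiable (by simp)
  have sliceT : ∀ (F : ℝ → ℝ → ℝ → ℝ),
      Differentiable ℝ (fun p : ℝ × ℝ × ℝ => F p.1 p.2.1 p.2.2) →
      ∀ x u, Differentiable ℝ (fun s => F s x u) := fun F hF x u =>
    hF.comp (differentiable_id.prodMk (differentiable_const (x, u)))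
  have sliceX : ∀ (F : ℝ → ℝ → ℝ → ℝ),
      Differentiable ℝ (fun p : ℝ × ℝ × ℝ => F p.1 p.2.1 p.2.2) →
      ∀ t u, Differentiable ℝ (fun s => F t s u) := fun F hF t u =>
    hF.comp ((differentiable_const t).prodMk (differentiable_id.prodMk (differentiable_const u)))
  -- t-derivatives vanish
  have e0τ : ∀ t x u, deriv (fun s => C.tau s x u) t = 0 := by
    intro t x u
    have a0 := congrFun (congrFun (congrFun (congrArg VF3.tau h0) t) x) u
    simpa [VF3.bracket, VF3.app, pt, px, pu] using a0
  have e0ξ : ∀ t x u, deriv (fun s => C.xi s x u) t = 0 := by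
    intro t x u
    have a0 := congrFun (congrFun (congrFun (congrArg VF3.xi h0) t) x) u
    simpa [VF3.bracket, VF3.app, pt, px, pu] using a0
  have e0η : ∀ t x u, deriv (fun s => C.eta s x u) t = 0 := by
    intro t x u
    have a0 := congrFun (congrFun (congrFun (congrArg VF3.eta h0) t) x) u
    simpa [VF3.bracket, VF3.app, pt, px, pu] using a0
  -- x-derivative equations
  have cancel : ∀ t a b : ℝ, Real.exp (-t) * a + b * Real.exp (-t) = 0 → a = -b := by
    intro t a b hab
    have h2 : Real.exp (-t) * (a + b) = 0 := by linear_combination hab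
    rcases mul_eq_zero.mp h2 with h | h
    · exact absurd h (Real.exp_ne_zero _)
    · linarith
  have e1τ : ∀ t x u, deriv (fun s => C.tau t s u) x = - C.tau t x u := by
    intro t x u
    have a1 := congrFun (congrFun (congrFun (congrArg VF3.tau h1) t) x) u
    simp [VF3.bracket, VF3.app, pt, px, pu, deriv_exp_neg', e0τ] at a1
    exact cancel t _ _ a1
  have e1ξ : ∀ t x u, deriv (fun s => C.xi t s u) x = - C.tau t x u := by
    intro t x u
    have a1 := congrFun (congrFun (congrFun (congrArg VF3.xi h1) t) x) u
    simp [VF3.bracket, VF3.app, pt, px, pu, deriv_exp_neg', e0ξ] at a1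
    exact cancel t _ _ a1
  have e1η : ∀ t x u, deriv (fun s => C.eta t s u) x = 0 := by
    intro t x u
    have a1 := congrFun (congrFun (congrFun (congrArg VF3.eta h1) t) x) u
    simpa [VF3.bracket, VF3.app, pt, px, pu, deriv_exp_neg', e0η] using a1
  -- t-constancy
  have cT : ∀ t x u, C.tau t x u = C.tau 0 x u := fun t x u =>
    is_const_of_deriv_eq_zero (sliceT _ Dτ x u) (fun s => e0τ s x u) t 0
  have cTξ : ∀ t x u, C.xi t x u = C.xi 0 x u := fun t x u =>
    is_const_of_deriv_eq_zero (sliceT _ Dξ x u) (fun s => e0ξ s x u) t 0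
  have cTη : ∀ t x u, C.eta t x u = C.eta 0 x u := fun t x u =>
    is_const_of_deriv_eq_zero (sliceT _ Dη x u) (fun s => e0η s x u) t 0
  refine ⟨fun u => C.tau 0 0 u, fun u => C.xi 0 0 u - C.tau 0 0 u, fun u => C.eta 0 0 u,
    ?_, ?_, ?_, ?_⟩
  · exact hτ.comp (contDiff_const.prodMk (contDiff_const.prodMk contDiff_id))
  · exact (hξ.comp (contDiff_const.prodMk (contDiff_const.prodMk contDiff_id))).sub
      (hτ.comp (contDiff_const.prodMk (contDiff_const.prodMk contDiff_id)))
  · exact hη.comp (contDiff_const.prodMk (contDiff_const.prodMk contDiff_id))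
  intro t x u
  -- τ form
  have keyτ : ∀ y, C.tau 0 y u * Real.exp y = C.tau 0 0 u := by
    intro y
    have hφ : ∀ s, HasDerivAt (fun y => C.tau 0 y u * Real.exp y) 0 s := by
      intro s
      have h1' : HasDerivAt (fun y => C.tau 0 y u) (deriv (fun y => C.tau 0 y u) s) s :=
        ((sliceX _ Dτ 0 u) s).hasDerivAt
      have h2 := h1'.mul (Real.hasDerivAt_exp s)
      have h3 : deriv (fun y => C.tau 0 y u) s * Real.exp s + C.tau 0 s u * Real.exp s = 0 := by
        rw [e1τ 0 s u]; ring
      rw [h3] at h2; exact h2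
    have := is_const_of_deriv_eq_zero (fun s => (hφ s).differentiableAt)
      (fun s => (hφ s).deriv) y 0
    simpa using this
  have hτform : C.tau t x u = C.tau 0 0 u * Real.exp (-x) := by
    rw [cT t x u, ← keyτ x, Real.exp_neg, mul_assoc, mul_inv_cancel₀ (Real.exp_ne_zero x),
      mul_one]
  refine ⟨hτform, ?_, ?_⟩
  · -- ξ form
    have keyξ : ∀ y, C.xi 0 y u - C.tau 0 0 u * Real.exp (-y) = C.xi 0 0 u - C.tau 0 0 u := by
      intro y
      have hφ : ∀ s, HasDerivAt (fun y => C.xi 0 y u - C.tau 0 0 u * Real.exp (-y)) 0 s := by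
        intro s
        have h1' : HasDerivAt (fun y => C.xi 0 y u) (deriv (fun y => C.xi 0 y u) s) s :=
          ((sliceX _ Dξ 0 u) s).hasDerivAt
        have h2' : HasDerivAt (fun y : ℝ => C.tau 0 0 u * Real.exp (-y))
            (C.tau 0 0 u * (Real.exp (-s) * (-1))) s :=
          ((Real.hasDerivAt_exp (-s)).comp s (hasDerivAt_neg s)).const_mul (C.tau 0 0 u)
        have h3 := h1'.sub h2'
        have h4 : deriv (fun y => C.xi 0 y u) s - C.tau 0 0 u * (Real.exp (-s) * (-1)) = 0 := by
          rw [e1ξ 0 s u]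
          have := keyτ s
          have hts : C.tau 0 s u = C.tau 0 0 u * Real.exp (-s) := by
            rw [← this, Real.exp_neg, mul_assoc, mul_inv_cancel₀ (Real.exp_ne_zero s), mul_one]
          rw [hts]; ring
        rw [h4] at h3; exact h3
      have := is_const_of_deriv_eq_zero (fun s => (hφ s).differentiableAt)
        (fun s => (hφ s).deriv) y 0
      simpa using this
    have := keyξ x
    rw [cTξ t x u]
    show C.xi 0 x u = C.xi 0 0 u - C.tau 0 0 u + C.tau 0 0 u * Real.exp (-x)
    linarith
  · -- η form
    have keyη : C.eta 0 x u = C.eta 0 0 u :=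
      is_const_of_deriv_eq_zero ((sliceX _ Dη 0 u)) (fun s => e1η 0 s u) x 0
    rw [cTη t x u, keyη]
end
end
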